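/- arXiv:0909.5366 — 2 statements merged into one kernel-verified Lean document; each statement's English description precedes it below -/
import Mathlib

section
/- Define g(x) = x − (1/2) log((1 + x + x²/2)/(1 − x + x²/2)) for x ∈ ℝ. Then for every real x, |g(x)| ≤ min{ |x|³/5, 3x²/10, |x| }. -/
/-!
Since `g` is odd, `|g x| = g |x|` and it suffices to bound `g` on `[0, ∞)`. There
`g' x = x² (2 + x²) / (4 + x⁴) ≥ 0`, so `g ≥ 0`, and the logarithm in `g` is nonnegative, so
`g x ≤ x`. For the bounds `x³/5` and `3x²/10` the difference `B - g` vanishes at `0` and its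
derivative factors with sign pattern `+, -, +` (sign changes at `√(2/3), 1`, resp. `1, 2`), so it
is nonnegative once it is nonnegative at the second sign change; at `x = 1`, resp. `x = 2`, both
conditions read `log 5 ≥ 8/5`, i.e. `e⁸ ≤ 5⁵`.
-/

open Real Set

noncomputable def g (x : ℝ) : ℝ :=
  x - (1 / 2) * log ((1 + x + x ^ 2 / 2) / (1 - x + x ^ 2 / 2))

lemma one_add_add_sq_div_two_pos (x : ℝ) : 0 < 1 + x + x ^ 2 / 2 := by
  nlinarith [sq_nonneg (x + 1)]

lemma one_sub_add_sq_div_two_pos (x : ℝ) : 0 < 1 - x + x ^ 2 / 2 := by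
  nlinarith [sq_nonneg (x - 1)]

lemma nonneg_of_hasDerivAt_nonneg_nonpos_nonneg {f f' : ℝ → ℝ} {p q : ℝ}
    (hf : ∀ x, HasDerivAt f (f' x) x) (h₀ : 0 ≤ f 0) (hq : 0 ≤ f q)
    (hinc₀ : ∀ x ∈ Icc 0 p, 0 ≤ f' x) (hdec : ∀ x ∈ Icc p q, f' x ≤ 0)
    (hinc₁ : ∀ x ∈ Ici q, 0 ≤ f' x) {x : ℝ} (hx : 0 ≤ x) : 0 ≤ f x := by
  have hcont : ContinuousOn f univ := fun x _ => (hf x).continuousAt.continuousWithinAt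
  have mono {D : Set ℝ} (hD : Convex ℝ D) (h : ∀ x ∈ D, 0 ≤ f' x) : MonotoneOn f D :=
    monotoneOn_of_hasDerivWithinAt_nonneg hD (hcont.mono (subset_univ D))
      (fun x _ => (hf x).hasDerivWithinAt) fun x hx => h x (interior_subset hx)
  have anti : AntitoneOn f (Icc p q) :=
    antitoneOn_of_hasDerivWithinAt_nonpos (convex_Icc p q) (hcont.mono (subset_univ _))
      (fun x _ => (hf x).hasDerivWithinAt) fun x hx => hdec x (interior_subset hx)
  rcases le_or_gt x p with hxp | hpx
  · exact h₀.trans (mono (convex_Icc 0 p) hinc₀ ⟨le_rfl, hx.trans hxp⟩ ⟨hx, hxp⟩ hx)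
  rcases le_or_gt x q with hxq | hqx
  · exact hq.trans (anti ⟨hpx.le, hxq⟩ ⟨hpx.le.trans hxq, le_rfl⟩ hxq)
  · exact hq.trans (mono (convex_Ici q) hinc₁ self_mem_Ici hqx.le hqx.le)

lemma hasDerivAt_g (x : ℝ) : HasDerivAt g (x ^ 2 * (2 + x ^ 2) / (4 + x ^ 4)) x := by
  have hN := one_add_add_sq_div_two_pos x
  have hD := one_sub_add_sq_div_two_pos x
  have hsq := (hasDerivAt_pow 2 x).div_const 2
  have hN' : HasDerivAt (fun y => 1 + y + y ^ 2 / 2) (1 + x) x :=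
    (((hasDerivAt_id' x).const_add 1).add hsq).congr_deriv (by norm_num)
  have hD' : HasDerivAt (fun y => 1 - y + y ^ 2 / 2) (x - 1) x :=
    (((hasDerivAt_id' x).const_sub 1).add hsq).congr_deriv (by norm_num; ring)
  refine ((hasDerivAt_id' x).sub (((hN'.div hD' hD.ne').log (div_pos hN hD).ne').const_mul
    (1 / 2))).congr_deriv ?_
  simp only [Pi.div_apply]
  -- the denominators in the form `field_simp` produces after clearing the halves
  have hN2 : 2 * (1 + x) + x ^ 2 ≠ 0 := by linarith
  have hD2 : 2 * (1 - x) + x ^ 2 ≠ 0 := by linarith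
  field_simp
  ring

lemma g_neg (x : ℝ) : g (-x) = -g x := by
  have hratio : (1 - x + x ^ 2 / 2) / (1 + x + x ^ 2 / 2) =
      ((1 + x + x ^ 2 / 2) / (1 - x + x ^ 2 / 2))⁻¹ := (inv_div _ _).symm
  simp only [g, neg_sq, sub_neg_eq_add, ← sub_eq_add_neg, hratio, log_inv]
  ring

lemma g_zero : g 0 = 0 := by simp [g]

lemma g_one : g 1 = 1 - log 5 / 2 := by norm_num [g]; ring

lemma g_two : g 2 = 2 - log 5 / 2 := by norm_num [g]; ring

lemma eight_fifths_le_log_five : 8 / 5 ≤ log 5 := by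
  rw [le_log_iff_exp_le (by norm_num)]
  refine le_of_pow_le_pow_left₀ (n := 5) (by norm_num) (by norm_num) ?_
  calc exp (8 / 5) ^ 5 = exp 1 ^ 8 := by rw [← exp_nat_mul, ← exp_nat_mul]; norm_num
    _ ≤ 2.7182818286 ^ 8 := by gcongr; exact exp_one_lt_d9.le
    _ ≤ 5 ^ 5 := by norm_num

lemma monotone_g : Monotone g :=
  monotone_of_hasDerivAt_nonneg hasDerivAt_g fun x => by positivity

lemma g_nonneg {x : ℝ} (hx : 0 ≤ x) : 0 ≤ g x := g_zero ▸ monotone_g hx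

lemma abs_g (x : ℝ) : |g x| = g |x| := by
  rcases le_or_gt 0 x with hx | hx
  · rw [abs_of_nonneg hx, abs_of_nonneg (g_nonneg hx)]
  · have h := g_nonneg (neg_nonneg.2 hx.le)
    rw [g_neg] at h
    rw [abs_of_neg hx, g_neg, abs_of_nonpos (by linarith)]

lemma g_le_self {x : ℝ} (hx : 0 ≤ x) : g x ≤ x := by
  have hD := one_sub_add_sq_div_two_pos x
  have hlog : 0 ≤ log ((1 + x + x ^ 2 / 2) / (1 - x + x ^ 2 / 2)) :=
    log_nonneg ((one_le_div hD).2 (by linarith))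
  rw [g]
  linarith

lemma hasDerivAt_cube_div_five_sub_g (x : ℝ) :
    HasDerivAt (fun y => y ^ 3 / 5 - g y)
      (x ^ 2 * ((3 * x ^ 2 - 2) * (x ^ 2 - 1)) / (5 * (4 + x ^ 4))) x := by
  refine (((hasDerivAt_pow 3 x).div_const 5).sub (hasDerivAt_g x)).congr_deriv ?_
  field_simp
  ring

lemma hasDerivAt_three_mul_sq_div_ten_sub_g (x : ℝ) :
    HasDerivAt (fun y => 3 * y ^ 2 / 10 - g y)
      (x * ((x - 1) * (x - 2)) * (3 * x ^ 2 + 4 * x + 6) / (5 * (4 + x ^ 4))) x := by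
  refine ((((hasDerivAt_pow 2 x).const_mul 3).div_const 10).sub (hasDerivAt_g x)).congr_deriv ?_
  field_simp
  ring

lemma g_le_cube_div_five {x : ℝ} (hx : 0 ≤ x) : g x ≤ x ^ 3 / 5 := by
  have h23 : (0 : ℝ) ≤ 2 / 3 := by norm_num
  refine sub_nonneg.1 (nonneg_of_hasDerivAt_nonneg_nonpos_nonneg (p := √(2 / 3)) (q := 1)
    hasDerivAt_cube_div_five_sub_g (by simp [g_zero]) ?_ ?_ ?_ ?_ hx)
  · rw [g_one]
    linarith [eight_fifths_le_log_five]
  · rintro y ⟨hy₀, hy⟩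
    have : y ^ 2 ≤ 2 / 3 := (le_sqrt hy₀ h23).1 hy
    exact div_nonneg (mul_nonneg (sq_nonneg y)
      (mul_nonneg_of_nonpos_of_nonpos (by linarith) (by linarith))) (by positivity)
  · rintro y ⟨hy₀, hy₁⟩
    have hy : 0 ≤ y := (sqrt_nonneg _).trans hy₀
    have : 2 / 3 ≤ y ^ 2 := (sqrt_le_left hy).1 hy₀
    have : y ^ 2 ≤ 1 := by nlinarith
    exact div_nonpos_of_nonpos_of_nonneg (mul_nonpos_of_nonneg_of_nonpos (sq_nonneg y)
      (mul_nonpos_of_nonneg_of_nonpos (by linarith) (by linarith))) (by positivity)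
  · intro y (hy : 1 ≤ y)
    exact div_nonneg (mul_nonneg (sq_nonneg y) (mul_nonneg (by nlinarith) (by nlinarith)))
      (by positivity)

lemma g_le_three_mul_sq_div_ten {x : ℝ} (hx : 0 ≤ x) : g x ≤ 3 * x ^ 2 / 10 := by
  have hquad (y : ℝ) : 0 < 3 * y ^ 2 + 4 * y + 6 := by nlinarith [sq_nonneg (3 * y + 2)]
  refine sub_nonneg.1 (nonneg_of_hasDerivAt_nonneg_nonpos_nonneg (p := 1) (q := 2)
    hasDerivAt_three_mul_sq_div_ten_sub_g (by simp [g_zero]) ?_ ?_ ?_ ?_ hx)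
  · rw [g_two]
    linarith [eight_fifths_le_log_five]
  · rintro y ⟨hy₀, hy₁⟩
    exact div_nonneg (mul_nonneg (mul_nonneg hy₀
      (mul_nonneg_of_nonpos_of_nonpos (by linarith) (by linarith))) (hquad y).le) (by positivity)
  · rintro y ⟨hy₁, hy₂⟩
    exact div_nonpos_of_nonpos_of_nonneg (mul_nonpos_of_nonpos_of_nonneg
      (mul_nonpos_of_nonneg_of_nonpos (by linarith)
        (mul_nonpos_of_nonneg_of_nonpos (by linarith) (by linarith))) (hquad y).le) (by positivity)
  · intro y (hy : 2 ≤ y)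
    exact div_nonneg (mul_nonneg (mul_nonneg (by linarith)
      (mul_nonneg (by linarith) (by linarith))) (hquad y).le) (by positivity)

/-- For `g(x) = x - (1/2) log((1 + x + x²/2)/(1 - x + x²/2))`, one has
`|g x| ≤ min (|x|³/5) (min (3x²/10) |x|)` for every real `x`. -/
theorem abs_g_le_min (x : ℝ) :
    |x - (1 / 2) * Real.log ((1 + x + x ^ 2 / 2) / (1 - x + x ^ 2 / 2))| ≤
      min (|x| ^ 3 / 5) (min (3 * x ^ 2 / 10) |x|) := by
  have hx := abs_nonneg x
  have h := le_min (g_le_cube_div_five hx) (le_min (g_le_three_mul_sq_div_ten hx) (g_le_self hx))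
  rwa [sq_abs, ← abs_g] at h
end

section
/- Let Y be a real random variable with finite fourth moment, mean m, variance v > 0, kurtosis κ and uniform kurtosis c. If the skewness is null, i.e. E[(Y − m)³] = 0, then c = κ + (3 − κ)²/(5 − κ) whenever 1 ≤ κ ≤ 3, and c = κ whenever κ ≥ 3. -/
/-!
Put `t = m - θ`. Expanding binomially around the mean, zero mean and zero skewness kill the odd
terms: `E[(Y - θ)⁴] = κ v² + 6 v t² + t⁴` and `E[(Y - θ)²] = v + t²`, so the uniform kurtosis is the
supremum over `s = t² ≥ 0` of `(κ v² + 6 v s + s²) / (v + s)²`. For `κ ≥ 3` this is at most `κ`,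
its value at `s = 0`. For `κ < 5` the bound `κ + (3 - κ)² / (5 - κ) = (9 - κ) / (5 - κ)` holds
because `(9 - κ) (v + s)² - (5 - κ) (κ v² + 6 v s + s²) = ((3 - κ) v - 2 s)²`, with equality at
`s = (3 - κ) v / 2`, which is admissible exactly when `κ ≤ 3`.
-/

open MeasureTheory ProbabilityTheory

section Moments

variable {Ω : Type*} [MeasurableSpace Ω] {P : Measure Ω}

lemma memLp_four_of_integrable_pow_four {Y : Ω → ℝ} (hY : AEStronglyMeasurable Y P)
    (hY4 : Integrable (fun ω => Y ω ^ 4) P) : MemLp Y 4 P := by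
  refine (integrable_norm_rpow_iff hY (by norm_num) (by norm_num)).mp ?_
  convert hY4 using 2 with ω
  norm_num [Real.norm_eq_abs, Even.pow_abs]

section FiniteMeasure

variable [IsFiniteMeasure P] {X : Ω → ℝ} {n : ℕ}

lemma MeasureTheory.MemLp.integrable_pow_of_le (hX : MemLp X n P) {k : ℕ} (hk : k ≤ n) :
    Integrable (fun ω => X ω ^ k) P :=
  (hX.mono_exponent (by exact_mod_cast hk)).integrable_norm_pow'.mono'
    (hX.aestronglyMeasurable.pow k) (ae_of_all _ fun ω => by simp [norm_pow])

lemma integral_add_const_pow (hX : MemLp X n P) (t : ℝ) :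
    ∫ ω, (X ω + t) ^ n ∂P =
      ∑ k ∈ Finset.range (n + 1), (∫ ω, X ω ^ k ∂P) * t ^ (n - k) * n.choose k := by
  simp_rw [add_pow]
  rw [integral_finsetSum _ fun k hk => ((hX.integrable_pow_of_le
    (Nat.lt_succ_iff.mp (Finset.mem_range.mp hk))).mul_const _).mul_const _]
  simp_rw [integral_mul_const]

end FiniteMeasure

variable [IsProbabilityMeasure P] {Y : Ω → ℝ}

lemma integral_sub_integral_eq_zero : ∫ ω, (Y ω - ∫ ω', Y ω' ∂P) ∂P = 0 := by
  simpa only [centralMoment, Pi.pow_apply, Pi.sub_apply, pow_one] using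
    centralMoment_one (X := Y) (μ := P)

lemma integral_sub_sq_eq (hY : MemLp Y 2 P) (θ : ℝ) :
    ∫ ω, (Y ω - θ) ^ 2 ∂P = ∫ ω, (Y ω - ∫ ω', Y ω' ∂P) ^ 2 ∂P + (∫ ω, Y ω ∂P - θ) ^ 2 := by
  have h := integral_add_const_pow (n := 2) (hY.sub (memLp_const (∫ ω, Y ω ∂P))) (∫ ω, Y ω ∂P - θ)
  simp only [Pi.sub_apply, sub_add_sub_cancel] at h
  norm_num [Finset.sum_range_succ, integral_sub_integral_eq_zero] at h
  linarith

lemma integral_sub_pow_four_eq_of_skewness_eq_zero (hY : MemLp Y 4 P)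
    (hskew : ∫ ω, (Y ω - ∫ ω', Y ω' ∂P) ^ 3 ∂P = 0) (θ : ℝ) :
    ∫ ω, (Y ω - θ) ^ 4 ∂P = ∫ ω, (Y ω - ∫ ω', Y ω' ∂P) ^ 4 ∂P +
      6 * (∫ ω, (Y ω - ∫ ω', Y ω' ∂P) ^ 2 ∂P) * (∫ ω, Y ω ∂P - θ) ^ 2 +
      (∫ ω, Y ω ∂P - θ) ^ 4 := by
  have h := integral_add_const_pow (n := 4) (hY.sub (memLp_const (∫ ω, Y ω ∂P))) (∫ ω, Y ω ∂P - θ)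
  simp only [Pi.sub_apply, sub_add_sub_cancel] at h
  norm_num [Finset.sum_range_succ, Nat.choose_two_right, integral_sub_integral_eq_zero, hskew] at h
  linarith

end Moments

/-- The kurtosis about a point at squared distance `s` from the mean, for a variable with variance
`v`, kurtosis `κ` and zero skewness. -/
noncomputable def shiftedKurtosis (κ v s : ℝ) : ℝ :=
  (κ * v ^ 2 + 6 * v * s + s ^ 2) / (v + s) ^ 2

section ShiftedKurtosis

variable {κ v : ℝ}

lemma shiftedKurtosis_zero (hv : v ≠ 0) : shiftedKurtosis κ v 0 = κ := by
  simp [shiftedKurtosis, hv]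

lemma shiftedKurtosis_le_of_three_le (hv : 0 < v) {s : ℝ} (hs : 0 ≤ s) (hκ : 3 ≤ κ) :
    shiftedKurtosis κ v s ≤ κ := by
  rw [shiftedKurtosis, div_le_iff₀ (by positivity)]
  nlinarith [mul_nonneg (mul_nonneg hv.le hs) (sub_nonneg.mpr hκ),
    mul_nonneg (sq_nonneg s) (by linarith : (0 : ℝ) ≤ κ - 1)]

lemma shiftedKurtosis_le_of_lt_five (hv : 0 < v) {s : ℝ} (hs : 0 ≤ s) (hκ : κ < 5) :
    shiftedKurtosis κ v s ≤ (9 - κ) / (5 - κ) := by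
  rw [shiftedKurtosis, div_le_div_iff₀ (by positivity) (by linarith)]
  nlinarith [sq_nonneg ((3 - κ) * v - 2 * s)]

lemma shiftedKurtosis_optimum (hv : 0 < v) (hκ : κ < 5) :
    shiftedKurtosis κ v ((3 - κ) * v / 2) = (9 - κ) / (5 - κ) := by
  have hden : 0 < v + (3 - κ) * v / 2 := by nlinarith
  rw [shiftedKurtosis, div_eq_div_iff (by positivity) (by linarith)]
  ring

lemma iSup_shiftedKurtosis_of_three_le (hv : 0 < v) (hκ : 3 ≤ κ) (m : ℝ) :
    ⨆ θ : ℝ, shiftedKurtosis κ v ((m - θ) ^ 2) = κ :=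
  ciSup_eq_of_forall_le_of_forall_lt_exists_gt
    (fun _ => shiftedKurtosis_le_of_three_le hv (sq_nonneg _) hκ)
    fun _ hw => ⟨m, by rwa [sub_self, zero_pow two_ne_zero, shiftedKurtosis_zero hv.ne']⟩

lemma iSup_shiftedKurtosis_of_le_three (hv : 0 < v) (hκ : κ ≤ 3) (m : ℝ) :
    ⨆ θ : ℝ, shiftedKurtosis κ v ((m - θ) ^ 2) = κ + (3 - κ) ^ 2 / (5 - κ) := by
  have hκ5 : κ < 5 := by linarith
  have hbound : κ + (3 - κ) ^ 2 / (5 - κ) = (9 - κ) / (5 - κ) := by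
    rw [eq_div_iff (by linarith), add_mul, div_mul_cancel₀ _ (by linarith)]
    ring
  obtain ⟨t, ht⟩ : ∃ t : ℝ, t ^ 2 = (3 - κ) * v / 2 :=
    ⟨√((3 - κ) * v / 2), Real.sq_sqrt (by nlinarith)⟩
  rw [hbound]
  exact ciSup_eq_of_forall_le_of_forall_lt_exists_gt
    (fun _ => shiftedKurtosis_le_of_lt_five hv (sq_nonneg _) hκ5)
    fun _ hw => ⟨m - t, by rwa [sub_sub_cancel, ht, shiftedKurtosis_optimum hv hκ5]⟩

end ShiftedKurtosis

/-- Lemma (uniform kurtosis under zero skewness): if `E[(Y - m)³] = 0` then the uniform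
kurtosis `c` equals `κ + (3 - κ)²/(5 - κ)` when `1 ≤ κ ≤ 3` and equals `κ` when `κ ≥ 3`. -/
theorem uniform_kurtosis_of_zero_skewness
    {Ω : Type*} [MeasurableSpace Ω] (P : Measure Ω) [IsProbabilityMeasure P]
    (Y : Ω → ℝ) (hY : Measurable Y)
    (hL4 : Integrable (fun ω => (Y ω) ^ 4) P)
    (m v κ c : ℝ)
    (hm : m = ∫ ω, Y ω ∂P)
    (hv : v = ∫ ω, (Y ω - m) ^ 2 ∂P) (hvpos : 0 < v)
    (hκ : κ = (∫ ω, (Y ω - m) ^ 4 ∂P) / v ^ 2)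
    (hc : c = ⨆ θ : ℝ, (∫ ω, (Y ω - θ) ^ 4 ∂P) / (∫ ω, (Y ω - θ) ^ 2 ∂P) ^ 2)
    (hskew : (∫ ω, (Y ω - m) ^ 3 ∂P) = 0) :
    (1 ≤ κ → κ ≤ 3 → c = κ + (3 - κ) ^ 2 / (5 - κ)) ∧
    (3 ≤ κ → c = κ) := by
  have hY4 := memLp_four_of_integrable_pow_four hY.aestronglyMeasurable hL4
  subst hm
  have hfourth : ∫ ω, (Y ω - ∫ ω', Y ω' ∂P) ^ 4 ∂P = κ * v ^ 2 := by
    rw [hκ, div_mul_cancel₀ _ (pow_ne_zero 2 hvpos.ne')]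
  have hratio : ∀ θ : ℝ, (∫ ω, (Y ω - θ) ^ 4 ∂P) / (∫ ω, (Y ω - θ) ^ 2 ∂P) ^ 2 =
      shiftedKurtosis κ v ((∫ ω, Y ω ∂P - θ) ^ 2) := fun θ => by
    rw [integral_sub_pow_four_eq_of_skewness_eq_zero hY4 hskew,
      integral_sub_sq_eq (hY4.mono_exponent (by norm_num)) θ, hfourth, ← hv, shiftedKurtosis]
    ring
  simp_rw [hc, hratio]
  exact ⟨fun _ hκ3 => iSup_shiftedKurtosis_of_le_three hvpos hκ3 _,
    fun hκ3 => iSup_shiftedKurtosis_of_three_le hvpos hκ3 _⟩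
end
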